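/- Let n, k be positive integers. For every λ ∈ ℤ^{kn} with |λ| ≢ 0 (mod n), one has m_λ(ζ_{(n,k)}) = 0. -/

import Mathlib

/-- `zetaC n` is the primitive `n`-th root of unity `exp(2π√-1/n)`. -/
noncomputable def zetaC (n : ℕ) : ℂ := Complex.exp (2 * Real.pi * Complex.I / n)

/-- `mval n N lam` is the special value `m_λ(ζ_{(n,k)})` of the monomial symmetric
polynomial attached to `λ ∈ ℤ^N` (with `N = k*n`), i.e.
`(∏_{i∈ℤ} λ[i]!)⁻¹ · Σ_{σ∈S_N} ∏_{j=1}^{N} ζ_n^{(j-1)·λ_{σ⁻¹(j)}}`. -/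
noncomputable def mval (n N : ℕ) (lam : Fin N → ℤ) : ℂ :=
  (∏ i ∈ Finset.univ.image lam,
      ((Nat.factorial ((Finset.univ.filter fun j => lam j = i).card) : ℂ)))⁻¹ *
    ∑ σ : Equiv.Perm (Fin N), ∏ j : Fin N, zetaC n ^ (((j : ℕ) : ℤ) * lam (σ⁻¹ j))

lemma zetaC_ne_zero (n : ℕ) : zetaC n ≠ 0 := Complex.exp_ne_zero _

lemma zetaC_zpow (n : ℕ) (m : ℤ) :
    zetaC n ^ m = Complex.exp ((m : ℂ) * (2 * Real.pi * Complex.I / n)) := by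
  rw [Complex.exp_int_mul, zetaC]

lemma zetaC_zpow_n (n : ℕ) (hn : 0 < n) : zetaC n ^ (n : ℤ) = 1 := by
  have hn0 : (n : ℂ) ≠ 0 := Nat.cast_ne_zero.mpr hn.ne'
  rw [zetaC_zpow]
  push_cast
  rw [show (n : ℂ) * (2 * Real.pi * Complex.I / n) = 2 * Real.pi * Complex.I by
    field_simp]
  exact Complex.exp_two_pi_mul_I

lemma zetaC_zpow_congr (n : ℕ) (hn : 0 < n) {x y : ℤ} (hxy : (n : ℤ) ∣ (x - y)) :
    zetaC n ^ x = zetaC n ^ y := by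
  obtain ⟨d, hd⟩ := hxy
  have hx : x = y + n * d := by linarith
  rw [hx, zpow_add₀ (zetaC_ne_zero n), zpow_mul, zetaC_zpow_n n hn, one_zpow, mul_one]

lemma zetaC_zpow_ne_one (n : ℕ) (hn : 0 < n) {m : ℤ} (hm : ¬ (n : ℤ) ∣ m) :
    zetaC n ^ m ≠ 1 := by
  intro h1
  rw [zetaC_zpow, Complex.exp_eq_one_iff] at h1
  obtain ⟨t, ht⟩ := h1
  apply hm
  refine ⟨t, ?_⟩
  have hn0 : (n : ℂ) ≠ 0 := Nat.cast_ne_zero.mpr hn.ne'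
  have hpi : (2 * (Real.pi : ℂ) * Complex.I) ≠ 0 := by
    simp [Real.pi_ne_zero, Complex.I_ne_zero]
  have hc : (m : ℂ) = (n : ℂ) * t := by
    field_simp at ht
    refine mul_right_cancel₀ hpi ?_
    rw [ht]
  exact_mod_cast hc

lemma zpow_sum' {α : Type*} {a : ℂ} (ha : a ≠ 0) (s : Finset α) (f : α → ℤ) :
    a ^ (∑ i ∈ s, f i) = ∏ i ∈ s, a ^ f i := by
  classical
  induction s using Finset.induction with
  | empty => simp
  | @insert x s hx ih => rw [Finset.sum_insert hx, Finset.prod_insert hx, zpow_add₀ ha, ih]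

lemma rotate_dvd (n N : ℕ) (hn : 0 < n) (hN : 0 < N) (hd : (n : ℤ) ∣ (N : ℤ)) (j : Fin N) :
    (n : ℤ) ∣ (((finRotate N j : ℕ) : ℤ) - (((j : ℕ) : ℤ) + 1)) := by
  obtain ⟨M, hM⟩ : ∃ M, N = M + 1 := ⟨N - 1, (Nat.succ_pred_eq_of_pos hN).symm⟩
  subst hM
  refine dvd_trans hd ?_
  rw [finRotate_succ_apply, Fin.val_add_one]
  by_cases hj : j = Fin.last M
  · rw [if_pos hj, hj]
    simp [Fin.val_last]
    push_cast
    exact ⟨-1, by push_cast; ring⟩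
  · rw [if_neg hj]
    simp

/-- if `|λ| ≢ 0 (mod n)` then `m_λ(ζ_{(n,k)}) = 0`. -/
theorem stmt_8 (n k : ℕ) (hn : 0 < n) (hk : 0 < k) (lam : Fin (k * n) → ℤ)
    (h : ¬ (n : ℤ) ∣ ∑ j, lam j) :
    mval n (k * n) lam = 0 := by
  have hN : 0 < k * n := Nat.mul_pos hk hn
  have hζ0 : zetaC n ≠ 0 := zetaC_ne_zero n
  suffices hS0 : (∑ σ : Equiv.Perm (Fin (k * n)), ∏ j : Fin (k * n),
      zetaC n ^ (((j : ℕ) : ℤ) * lam (σ⁻¹ j))) = 0 by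
    rw [mval, hS0, mul_zero]
  have hdvdN : (n : ℤ) ∣ ((k * n : ℕ) : ℤ) := ⟨k, by push_cast; ring⟩
  set c : Equiv.Perm (Fin (k * n)) := finRotate (k * n) with hcdef
  set S := ∑ σ : Equiv.Perm (Fin (k * n)), ∏ j : Fin (k * n),
      zetaC n ^ (((j : ℕ) : ℤ) * lam (σ⁻¹ j)) with hSdef
  have key : zetaC n ^ (∑ j, lam j) * S = S := by
    rw [hSdef, Finset.mul_sum]
    refine Fintype.sum_equiv (Equiv.mulLeft c) _ _ fun σ => ?_
    have step1 : ∏ j : Fin (k * n), zetaC n ^ (((j : ℕ) : ℤ) * lam (((Equiv.mulLeft c) σ)⁻¹ j)) =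
        ∏ j : Fin (k * n), zetaC n ^ (((c j : ℕ) : ℤ) * lam (σ⁻¹ j)) := by
      rw [← Equiv.prod_comp c fun j => zetaC n ^ (((j : ℕ) : ℤ) * lam (((Equiv.mulLeft c) σ)⁻¹ j))]
      refine Finset.prod_congr rfl fun j _ => ?_
      congr 2
      simp [Equiv.Perm.mul_apply]
    have step2 : ∀ j : Fin (k * n), zetaC n ^ (((c j : ℕ) : ℤ) * lam (σ⁻¹ j)) =
        zetaC n ^ (lam (σ⁻¹ j)) * zetaC n ^ (((j : ℕ) : ℤ) * lam (σ⁻¹ j)) := by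
      intro j
      rw [← zpow_add₀ hζ0]
      refine zetaC_zpow_congr n hn ?_
      obtain ⟨d, hd⟩ := rotate_dvd n (k * n) hn hN hdvdN j
      exact ⟨d * lam (σ⁻¹ j), by rw [hcdef]; linear_combination lam (σ⁻¹ j) * hd⟩
    refine Eq.symm ?_
    rw [step1]
    calc ∏ j : Fin (k * n), zetaC n ^ (((c j : ℕ) : ℤ) * lam (σ⁻¹ j))
        = ∏ j : Fin (k * n), (zetaC n ^ (lam (σ⁻¹ j)) *
            zetaC n ^ (((j : ℕ) : ℤ) * lam (σ⁻¹ j))) :=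
          Finset.prod_congr rfl fun j _ => step2 j
      _ = (∏ j : Fin (k * n), zetaC n ^ (lam (σ⁻¹ j))) *
            ∏ j : Fin (k * n), zetaC n ^ (((j : ℕ) : ℤ) * lam (σ⁻¹ j)) :=
          Finset.prod_mul_distrib
      _ = zetaC n ^ (∑ j, lam j) *
            ∏ j : Fin (k * n), zetaC n ^ (((j : ℕ) : ℤ) * lam (σ⁻¹ j)) := by
          congr 1
          rw [← Equiv.sum_comp σ⁻¹ lam, zpow_sum' hζ0]
  have hne : zetaC n ^ (∑ j, lam j) ≠ 1 := zetaC_zpow_ne_one n hn h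
  have hz : (zetaC n ^ (∑ j, lam j) - 1) * S = 0 := by
    rw [sub_mul, one_mul, key, sub_self]
  rcases mul_eq_zero.mp hz with h1 | h2
  · exact absurd (sub_eq_zero.mp h1) hne
  · exact h2
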